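/- arXiv:2506.03633 — 6 statements merged into one kernel-verified Lean document; each statement's English description precedes it below -/
import Mathlib

section
/- For every integer c, the set of functions a : ℕ → {0,1} with a(0) = a(1) = 0 for which there exists a sequence of integers (t_ℓ)_{ℓ∈ℕ} satisfying (ℓ+1)·t_{ℓ+1} = t_ℓ − (c − a(ℓ)) for all ℓ ∈ ℕ is countable. -/
/-- **Countability of the set of good 0/1 sequences.**
For every integer `c`, the set of functions `a : ℕ → {0,1}` with `a 0 = a 1 = 0`
for which there exists an integer sequence `(t_ℓ)` satisfying
`(ℓ+1)·t_{ℓ+1} = t_ℓ − (c − a ℓ)` for all `ℓ`, is countable. -/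
theorem stmt3 (c : ℤ) :
    Set.Countable {a : ℕ → Fin 2 | a 0 = 0 ∧ a 1 = 0 ∧
      ∃ t : ℕ → ℤ, ∀ ℓ : ℕ,
        ((ℓ : ℤ) + 1) * t (ℓ + 1) = t ℓ - (c - ((a ℓ : ℕ) : ℤ))} := by
  set S := {a : ℕ → Fin 2 | a 0 = 0 ∧ a 1 = 0 ∧
      ∃ t : ℕ → ℤ, ∀ ℓ : ℕ,
        ((ℓ : ℤ) + 1) * t (ℓ + 1) = t ℓ - (c - ((a ℓ : ℕ) : ℤ))} with hS
  have key : ∀ (a a' : ℕ → Fin 2), a ∈ S → a' ∈ S →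
      ∀ (t t' : ℕ → ℤ),
      (∀ ℓ : ℕ, ((ℓ : ℤ) + 1) * t (ℓ + 1) = t ℓ - (c - ((a ℓ : ℕ) : ℤ))) →
      (∀ ℓ : ℕ, ((ℓ : ℤ) + 1) * t' (ℓ + 1) = t' ℓ - (c - ((a' ℓ : ℕ) : ℤ))) →
      t 1 = t' 1 → a = a' := by
    intro a a' ha ha' t t' ht ht' h1
    obtain ⟨ha0, ha1, -⟩ := ha
    obtain ⟨ha0', ha1', -⟩ := ha'
    have hb : ∀ b : Fin 2, ((b : ℕ) : ℤ) = 0 ∨ ((b : ℕ) : ℤ) = 1 := by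
      intro b; fin_cases b <;> simp
    have main : ∀ ℓ : ℕ, t (ℓ + 1) = t' (ℓ + 1) := by
      intro ℓ
      induction ℓ with
      | zero => exact h1
      | succ n ih =>
        have e := ht (n + 1)
        have e' := ht' (n + 1)
        rw [ih] at e
        have hn : (0:ℤ) ≤ (n:ℤ) := Int.natCast_nonneg n
        have hdvd : ((n : ℤ) + 1 + 1) ∣
            (((a (n+1) : ℕ) : ℤ) - ((a' (n+1) : ℕ) : ℤ)) := by
          refine ⟨t (n + 1 + 1) - t' (n + 1 + 1), ?_⟩
          push_cast at e e' ⊢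
          linarith
        have hlt : |(((a (n+1) : ℕ) : ℤ) - ((a' (n+1) : ℕ) : ℤ))| < (n : ℤ) + 1 + 1 := by
          rcases hb (a (n+1)) with h | h <;> rcases hb (a' (n+1)) with h' | h' <;>
            rw [h, h'] <;> rw [abs_lt] <;> constructor <;> linarith
        have hz := Int.eq_zero_of_abs_lt_dvd hdvd hlt
        have hcast : ((a (n+1) : ℕ) : ℤ) = ((a' (n+1) : ℕ) : ℤ) := by omega
        rw [hcast] at e
        have hne : ((n : ℤ) + 1 + 1) ≠ 0 := by positivity
        refine mul_left_cancel₀ hne ?_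
        push_cast at e e' ⊢
        linarith
    funext n
    cases n with
    | zero => exact ha0.trans ha0'.symm
    | succ m =>
      -- use recurrence at m+1 together with main m and main (m+1)
      have e := ht (m + 1)
      have e' := ht' (m + 1)
      rw [main m, main (m + 1)] at e
      have hcast : ((a (m+1) : ℕ) : ℤ) = ((a' (m+1) : ℕ) : ℤ) := by linarith
      have : (a (m+1) : ℕ) = (a' (m+1) : ℕ) := by exact_mod_cast hcast
      exact Fin.val_injective this
  have hinj : ∃ f : S → ℤ, Function.Injective f := by
    refine ⟨fun a => (a.2.2.2.choose) 1, ?_⟩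
    rintro ⟨a, ha⟩ ⟨a', ha'⟩ h
    ext1
    exact key a a' ha ha' _ _ ha.2.2.choose_spec ha'.2.2.choose_spec h
  obtain ⟨f, hf⟩ := hinj
  have : Countable S := hf.countable
  exact Set.countable_coe_iff.mp this
end

section
/- For every integer c there exists a function a : ℕ → {0,1} with a(0) = a(1) = 0 such that no sequence of integers (t_ℓ)_{ℓ∈ℕ} satisfies (ℓ+1)·t_{ℓ+1} = t_ℓ − (c − a(ℓ)) for all ℓ ∈ ℕ. -/
/-- **Existence of a bad 0/1 sequence.**
For every integer `c` there is a function `a : ℕ → {0,1}` with `a 0 = a 1 = 0`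
such that no integer sequence `(t_ℓ)` satisfies
`(ℓ+1)·t_{ℓ+1} = t_ℓ − (c − a ℓ)` for all `ℓ`. -/
theorem stmt4 (c : ℤ) :
    ∃ a : ℕ → Fin 2, a 0 = 0 ∧ a 1 = 0 ∧
      ¬ ∃ t : ℕ → ℤ, ∀ ℓ : ℕ,
        ((ℓ : ℤ) + 1) * t (ℓ + 1) = t ℓ - (c - ((a ℓ : ℕ) : ℤ)) := by
  refine ⟨fun ℓ => if ℓ < 2 then 0 else ⟨ℓ % 2, Nat.mod_lt _ two_pos⟩, rfl, rfl, ?_⟩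
  rintro ⟨t, h⟩
  -- value of a
  have haval : ∀ ℓ : ℕ, 2 ≤ ℓ →
      (((if ℓ < 2 then (0 : Fin 2) else ⟨ℓ % 2, Nat.mod_lt _ two_pos⟩) : Fin 2) : ℕ)
        = ℓ % 2 := by
    intro ℓ hℓ
    rw [if_neg (by omega)]
  have habd : ∀ ℓ : ℕ,
      ((((if ℓ < 2 then (0 : Fin 2) else ⟨ℓ % 2, Nat.mod_lt _ two_pos⟩) : Fin 2) : ℕ) : ℤ)
        ≤ 1 ∧ (0:ℤ) ≤ (((if ℓ < 2 then (0 : Fin 2) else ⟨ℓ % 2, Nat.mod_lt _ two_pos⟩) : Fin 2) : ℕ) := by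
    intro ℓ
    constructor
    · exact_mod_cast Nat.lt_succ_iff.mp (Fin.is_lt _)
    · positivity
  set B : ℤ := |t 1| + |c| + 2 with hB
  -- boundedness
  have hbound : ∀ ℓ : ℕ, 1 ≤ ℓ → |t ℓ| ≤ B := by
    intro ℓ hℓ
    induction ℓ, hℓ using Nat.le_induction with
    | base => simp only [hB]; linarith [abs_nonneg c]
    | succ ℓ hℓ ih =>
      have hrec := h ℓ
      beta_reduce at hrec
      have h1 := (habd ℓ).1
      have h2 := (habd ℓ).2
      have hl : (2:ℤ) ≤ (ℓ:ℤ) + 1 := by exact_mod_cast Nat.succ_le_succ hℓ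
      have habs : ((ℓ:ℤ)+1) * |t (ℓ+1)| = |t ℓ - (c - ((((if ℓ < 2 then (0 : Fin 2) else ⟨ℓ % 2, Nat.mod_lt _ two_pos⟩) : Fin 2) : ℕ) : ℤ))| := by
        rw [← hrec, abs_mul, abs_of_pos (by linarith : (0:ℤ) < (ℓ:ℤ)+1)]
      have h3 : |t ℓ - (c - (((if ℓ < 2 then (0 : Fin 2) else ⟨ℓ % 2, Nat.mod_lt _ two_pos⟩) : Fin 2) : ℕ) : ℤ)| ≤ |t ℓ| + |c| + 1 := by
        have := abs_sub (t ℓ) (c - (((if ℓ < 2 then (0 : Fin 2) else ⟨ℓ % 2, Nat.mod_lt _ two_pos⟩) : Fin 2) : ℕ) : ℤ)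
        have := abs_sub c ((((if ℓ < 2 then (0 : Fin 2) else ⟨ℓ % 2, Nat.mod_lt _ two_pos⟩) : Fin 2) : ℕ) : ℤ)
        have habs2 : |((((if ℓ < 2 then (0 : Fin 2) else ⟨ℓ % 2, Nat.mod_lt _ two_pos⟩) : Fin 2) : ℕ) : ℤ)| ≤ 1 := by
          rw [abs_of_nonneg h2]; exact h1
        linarith
      have h4 : ((ℓ:ℤ)+1) * |t (ℓ+1)| ≤ B + |c| + 1 := by
        rw [habs]; linarith
      have h5 : 2 * |t (ℓ+1)| ≤ ((ℓ:ℤ)+1) * |t (ℓ+1)| :=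
        mul_le_mul_of_nonneg_right hl (abs_nonneg _)
      have hc : (0:ℤ) ≤ |c| := abs_nonneg _
      have ht1 : (0:ℤ) ≤ |t 1| := abs_nonneg _
      simp only [hB] at *
      linarith
  -- eventual vanishing
  set N : ℕ := 2 + (|t 1| + 2 * |c| + 3).toNat with hN
  have hNB : B + |c| + 1 ≤ (N : ℤ) := by
    have : (0:ℤ) ≤ |t 1| + 2 * |c| + 3 := by positivity
    have := Int.toNat_of_nonneg this
    simp only [hN, hB]
    push_cast
    omega
  have hzero : ∀ ℓ : ℕ, N ≤ ℓ → t (ℓ + 1) = 0 := by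
    intro ℓ hℓ
    have hrec := h ℓ
    beta_reduce at hrec
    have h1 := (habd ℓ).1
    have h2 := (habd ℓ).2
    have hbd := hbound ℓ (by omega)
    have hl : ((N:ℤ)) ≤ (ℓ:ℤ) := by exact_mod_cast hℓ
    by_contra hne
    have h6 : 1 ≤ |t (ℓ+1)| := Int.one_le_abs (by simpa using hne)
    have habs : ((ℓ:ℤ)+1) * |t (ℓ+1)| = |t ℓ - (c - ((((if ℓ < 2 then (0 : Fin 2) else ⟨ℓ % 2, Nat.mod_lt _ two_pos⟩) : Fin 2) : ℕ) : ℤ))| := by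
      rw [← hrec, abs_mul, abs_of_pos (by linarith [Nat.cast_nonneg (α := ℤ) N] : (0:ℤ) < (ℓ:ℤ)+1)]
    have habs2 : |((((if ℓ < 2 then (0 : Fin 2) else ⟨ℓ % 2, Nat.mod_lt _ two_pos⟩) : Fin 2) : ℕ) : ℤ)| ≤ 1 := by
      rw [abs_of_nonneg h2]; exact h1
    have h3 : |t ℓ - (c - (((if ℓ < 2 then (0 : Fin 2) else ⟨ℓ % 2, Nat.mod_lt _ two_pos⟩) : Fin 2) : ℕ) : ℤ)| ≤ B + |c| + 1 := by
      have := abs_sub (t ℓ) (c - (((if ℓ < 2 then (0 : Fin 2) else ⟨ℓ % 2, Nat.mod_lt _ two_pos⟩) : Fin 2) : ℕ) : ℤ)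
      have := abs_sub c ((((if ℓ < 2 then (0 : Fin 2) else ⟨ℓ % 2, Nat.mod_lt _ two_pos⟩) : Fin 2) : ℕ) : ℤ)
      linarith
    have h7 : (ℓ:ℤ) + 1 ≤ ((ℓ:ℤ)+1) * |t (ℓ+1)| := by
      nlinarith
    linarith
  -- derive contradiction using parity
  have key : ∀ ℓ : ℕ, N + 1 ≤ ℓ → c = ((ℓ % 2 : ℕ) : ℤ) := by
    intro ℓ hℓ
    have hrec := h ℓ
    beta_reduce at hrec
    have e1 : t ℓ = 0 := by
      obtain ⟨m, rfl⟩ : ∃ m, ℓ = m + 1 := ⟨ℓ - 1, by omega⟩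
      exact hzero m (by omega)
    have e2 : t (ℓ + 1) = 0 := hzero ℓ (by omega)
    rw [e1, e2, haval ℓ (by omega)] at hrec
    linarith [hrec]
  have k1 := key (N + 1) (le_refl _)
  have k2 := key (N + 2) (by omega)
  have : (N + 1) % 2 + (N + 2) % 2 = 1 := by omega
  omega
end

section
/- Let κ be a regular uncountable cardinal and ⟨λ_j : j < κ⟩ a sequence of nonzero ordinals, and let the levels 𝒯_i (i < κ) of the tree 𝒯 be defined as in the context. Then the tree (𝒯, ⊴) has no κ-branch: there is no sequence ⟨η_i : i < κ⟩ such that η_i ∈ 𝒯_i for all i < κ and η_i = η_j ↾ (i+1) whenever i < j < κ. -/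
/-!
Along a branch `⟨η_i : i < κ⟩` all nodes are restrictions of one function `F`. Its first
coordinate is nondecreasing and takes finitely many values below each `i < κ`; since `cof κ > ω`,
a countable set of indices below `κ` is bounded, so it takes finitely many values on all of `κ` and
is therefore constant from some `j₁` on. Condition (f) at `j₂ = max (j₁ + 1) η(j₁,2) < κ` then
demands `j₂ < η(j₁,2)`, which is absurd.
-/

open Cardinal

/-- `η` (a function recording the pairs `η(j) = (η(j,1), η(j,2))` for `j ≤ i`; values
beyond `i` are irrelevant) is a node of the `i`-th level `𝒯_i` of the tree `𝒯`:
(c) `η(j,1) < λ_j` and `η(j,2) < κ` for `j ≤ i`;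
(d) both coordinates are nondecreasing on `j ≤ i`;
(e) `η` has finitely many values on `j ≤ i`;
(f) if `j₁ < j₂ ≤ i` and the first coordinate is constant on `[j₁, j₂]`, then
    `j₂ < η(j₁,2)`. -/
def InLevel (lam : Ordinal → Ordinal) (κ i : Ordinal)
    (η : Ordinal → Ordinal × Ordinal) : Prop :=
  (∀ j ≤ i, (η j).1 < lam j ∧ (η j).2 < κ) ∧
  (∀ j₁ j₂ : Ordinal, j₁ < j₂ → j₂ ≤ i → (η j₁).1 ≤ (η j₂).1 ∧ (η j₁).2 ≤ (η j₂).2) ∧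
  (η '' Set.Iic i).Finite ∧
  (∀ j₁ j₂ : Ordinal, j₁ < j₂ → j₂ ≤ i →
    (∀ j, j₁ ≤ j → j ≤ j₂ → (η j).1 = (η j₁).1) → j₂ < (η j₁).2)

open Set

theorem MonotoneOn.exists_forall_ge_eq_of_finite_image {ι α : Type*} [Preorder ι]
    [PartialOrder α] {f : ι → α} {s : Set ι} (hf : MonotoneOn f s) (hfin : (f '' s).Finite)
    (hs : s.Nonempty) : ∃ j ∈ s, ∀ k ∈ s, j ≤ k → f k = f j := by
  obtain ⟨j, hj, hmax⟩ := hfin.exists_maximalFor' f s hs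
  exact ⟨j, hj, fun k hk hjk => (hmax hk (hf hj hk hjk)).antisymm (hf hj hk hjk)⟩

theorem Ordinal.finite_image_Iio_of_aleph0_lt_cof {β : Type*} {o : Ordinal} (ho : ℵ₀ < o.cof)
    (f : Ordinal → β) (hf : ∀ i < o, (f '' Iic i).Finite) : (f '' Iio o).Finite := by
  by_contra hinf
  let e := Set.Infinite.natEmbedding _ hinf
  choose idx hidx hfe using fun n => (e n).2
  have hsup : ⨆ n, idx n < o :=
    Ordinal.lift_iSup_lt_of_lt_cof (by simpa [← Ordinal.lift_cof] using ho) hidx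
  refine infinite_range_of_injective (Subtype.val_injective.comp e.injective)
    ((hf _ hsup).subset ?_)
  rintro _ ⟨n, rfl⟩
  exact ⟨idx n, Ordinal.le_iSup idx n, hfe n⟩

section InLevel

universe u v

variable {lam : Ordinal.{u} → Ordinal.{v}} {o i : Ordinal.{u}}
  {F : Ordinal.{u} → Ordinal.{v} × Ordinal.{u}}

theorem InLevel.of_eqOn {η : Ordinal.{u} → Ordinal.{v} × Ordinal.{u}} (hη : InLevel lam o i η)
    (h : EqOn η F (Iic i)) : InLevel lam o i F := by
  obtain ⟨hc, hd, he, hf⟩ := hη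
  refine ⟨fun j hj => h hj ▸ hc j hj, fun j₁ j₂ h12 h2 => ?_, h.image_eq ▸ he,
    fun j₁ j₂ h12 h2 hconst => ?_⟩
  · rw [← h h2, ← h (h12.le.trans h2)]
    exact hd j₁ j₂ h12 h2
  · rw [← h (h12.le.trans h2)]
    refine hf j₁ j₂ h12 h2 fun j hj1 hj2 => ?_
    rw [h (show j ≤ i from hj2.trans h2), h (h12.le.trans h2)]
    exact hconst j hj1 hj2

theorem monotoneOn_fst_of_forall_inLevel (hF : ∀ i < o, InLevel lam o i F) :
    MonotoneOn (fun j => (F j).1) (Iio o) := by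
  intro a _ b hb hab
  rcases hab.eq_or_lt with rfl | hab
  · rfl
  · exact ((hF b hb).2.1 a b hab le_rfl).1

theorem not_eventually_const_fst_of_forall_inLevel (ho : Order.IsSuccLimit o)
    (hF : ∀ i < o, InLevel lam o i F) :
    ¬ ∃ j₁ ∈ Iio o, ∀ j ∈ Iio o, j₁ ≤ j → (F j).1 = (F j₁).1 := by
  rintro ⟨j₁, hj₁, hconst⟩
  set j₂ := max (j₁ + 1) (F j₁).2
  have hj₂ : j₂ < o := max_lt (ho.succ_lt hj₁) ((hF j₁ hj₁).1 j₁ le_rfl).2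
  have h12 : j₁ < j₂ := (Order.lt_succ j₁).trans_le (le_max_left _ _)
  refine (le_max_right (j₁ + 1) (F j₁).2).not_gt <| (hF j₂ hj₂).2.2.2 j₁ j₂ h12 le_rfl
    fun j hj1 hj2 => hconst j (hj2.trans_lt hj₂) hj1

theorem not_forall_inLevel_of_aleph0_lt_cof (ho : ℵ₀ < o.cof) :
    ¬ ∀ i < o, InLevel lam o i F := by
  intro hF
  have hfin : ((fun j => (F j).1) '' Iio o).Finite :=
    Ordinal.finite_image_Iio_of_aleph0_lt_cof ho _ fun i hi => by
      simpa only [image_image] using (hF i hi).2.2.1.image Prod.fst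
  have hlim : Order.IsSuccLimit o := Ordinal.one_lt_cof_iff.1 (one_lt_aleph0.trans ho)
  exact not_eventually_const_fst_of_forall_inLevel hlim hF <|
    (monotoneOn_fst_of_forall_inLevel hF).exists_forall_ge_eq_of_finite_image hfin
      ⟨0, hlim.bot_lt⟩

end InLevel

theorem stmt5_general (κ : Cardinal) (hκreg : κ.IsRegular) (hκunc : ℵ₀ < κ)
    (lam : Ordinal → Ordinal) :
    ¬ ∃ η : Ordinal → Ordinal → Ordinal × Ordinal,
        (∀ i < κ.ord, InLevel lam κ.ord i (η i)) ∧
        (∀ i j : Ordinal, i < j → j < κ.ord → ∀ k ≤ i, η j k = η i k) := by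
  rintro ⟨η, hlev, hcoh⟩
  have hbranch : ∀ i < κ.ord, EqOn (η i) (fun k => η k k) (Iic i) := by
    intro i hi k hk
    rcases (show k ≤ i from hk).eq_or_lt with rfl | hk
    · rfl
    · exact hcoh k i hk hi k le_rfl
  exact not_forall_inLevel_of_aleph0_lt_cof (by rwa [hκreg.cof_ord])
    fun i hi => (hlev i hi).of_eqOn (hbranch i hi)

/-- **The tree `𝒯` has no `κ`-branch** (Claim 2.7 of the paper):
for a regular uncountable cardinal `κ` and nonzero ordinals `⟨λ_j : j < κ⟩`, there is
no sequence `⟨η_i : i < κ⟩` with `η_i ∈ 𝒯_i` which is coherent under restriction. -/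
theorem stmt5 (κ : Cardinal) (hκreg : κ.IsRegular) (hκunc : ℵ₀ < κ)
    (lam : Ordinal → Ordinal) (hlam : ∀ j < κ.ord, lam j ≠ 0) :
    ¬ ∃ η : Ordinal → Ordinal → Ordinal × Ordinal,
        (∀ i < κ.ord, InLevel lam κ.ord i (η i)) ∧
        (∀ i j : Ordinal, i < j → j < κ.ord → ∀ k ≤ i, η j k = η i k) :=
  stmt5_general κ hκreg hκunc lam
end

section
/- Let κ be a regular uncountable cardinal and ⟨λ_j : j < κ⟩ a strictly increasing sequence of infinite cardinals, and let the levels 𝒯_i (i < κ) of the tree 𝒯 be defined as in the context. Then for all i < j < κ and every η ∈ 𝒯_i there exists ν ∈ 𝒯_j such that ν ↾ (i+1) = η; in particular every level 𝒯_i is nonempty and every node of 𝒯 has extensions at every higher level below κ. -/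
open Cardinal

open Order

/-!
A constant node `(0, i + 1)` lies on level `i`. A node `η` on level `i` extends to level
`j > i` by continuing it constantly with `((η i).1 + 1, max (η i).2 (j + 1))`: raising the
first coordinate starts a new block, so condition (f) only has to hold on `(i, j]`, where the
second coordinate exceeds `j`. The new first coordinate stays below `λ_k` for `k > i` because
`λ_i ≤ λ_k` and `λ_k` is an infinite cardinal, hence a limit ordinal.
-/

section InLevel

variable {lam : Ordinal → Ordinal} {κ i j : Ordinal} {η : Ordinal → Ordinal × Ordinal}

theorem inLevel_const {a b : Ordinal} (ha : ∀ k ≤ i, a < lam k) (hib : i < b) (hb : b < κ) :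
    InLevel lam κ i fun _ => (a, b) := by
  refine ⟨fun k hk => ⟨ha k hk, hb⟩, fun _ _ _ _ => ⟨le_rfl, le_rfl⟩, ?_,
    fun _ k _ hk _ => hk.trans_lt hib⟩
  exact (Set.finite_singleton (a, b)).subset (Set.image_subset_iff.mpr fun _ _ => rfl)

theorem InLevel.monotoneOn (hη : InLevel lam κ i η) : MonotoneOn η (Set.Iic i) := by
  intro k₁ _ k₂ hk₂ h
  rcases h.eq_or_lt with rfl | h
  · exact le_rfl
  · exact Prod.le_def.mpr (hη.2.1 k₁ k₂ h hk₂)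

theorem InLevel.piecewise_const (hη : InLevel lam κ i η) {a : Ordinal × Ordinal}
    (ha₁ : ∀ k, i < k → k ≤ j → a.1 < lam k) (ha₂ : a.2 < κ) (hηa₁ : (η i).1 < a.1)
    (hηa₂ : (η i).2 ≤ a.2) (hja : j < a.2) :
    InLevel lam κ j ((Set.Iic i).piecewise η fun _ => a) := by
  have hmono := hη.monotoneOn
  obtain ⟨hc, -, he, hf⟩ := hη
  set ν := (Set.Iic i).piecewise η fun _ => a
  have hν_le {k} (hk : k ≤ i) : ν k = η k := Set.piecewise_eq_of_mem _ _ _ hk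
  have hν_gt {k} (hk : ¬k ≤ i) : ν k = a := Set.piecewise_eq_of_notMem _ _ _ hk
  have hηa {k} (hk : k ≤ i) : η k ≤ a :=
    (hmono hk Set.self_mem_Iic hk).trans (Prod.le_def.mpr ⟨hηa₁.le, hηa₂⟩)
  refine ⟨fun k hk => ?_, fun k₁ k₂ h12 hk₂ => ?_, ?_, fun k₁ k₂ h12 hk₂ hconst => ?_⟩
  · by_cases hki : k ≤ i
    · rw [hν_le hki]; exact hc k hki
    · rw [hν_gt hki]; exact ⟨ha₁ k (not_le.mp hki) hk, ha₂⟩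
  · refine Prod.le_def.mp ?_
    by_cases hk₂i : k₂ ≤ i
    · rw [hν_le hk₂i, hν_le (h12.le.trans hk₂i)]
      exact hmono (h12.le.trans hk₂i) hk₂i h12.le
    · rw [hν_gt hk₂i]
      by_cases hk₁i : k₁ ≤ i
      · rw [hν_le hk₁i]; exact hηa hk₁i
      · rw [hν_gt hk₁i]
  · refine (he.union (Set.finite_singleton a)).subset ?_
    rintro _ ⟨k, -, rfl⟩
    by_cases hki : k ≤ i
    · exact Or.inl ⟨k, hki, (hν_le hki).symm⟩
    · exact Or.inr (hν_gt hki)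
  · by_cases hk₂i : k₂ ≤ i
    · have hk₁i := h12.le.trans hk₂i
      rw [hν_le hk₁i]
      refine hf k₁ k₂ h12 hk₂i fun k hk₁ hk₂ => ?_
      simpa only [hν_le (hk₂.trans hk₂i), hν_le hk₁i] using hconst k hk₁ hk₂
    by_cases hk₁i : k₁ ≤ i
    · -- the first coordinate jumps past `(η i).1` right after `i`
      have h := hconst k₂ h12.le le_rfl
      rw [hν_gt hk₂i, hν_le hk₁i] at h
      exact absurd hηa₁ (h.trans_le (Prod.le_def.mp (hmono hk₁i Set.self_mem_Iic hk₁i)).1).not_gt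
    · rw [hν_gt hk₁i]; exact hk₂.trans_lt hja

end InLevel

theorem stmt7_general (κ : Cardinal) (hκunc : ℵ₀ < κ)
    (lam : Ordinal → Cardinal)
    (hmono : StrictMonoOn lam (Set.Iio κ.ord))
    (hinf : ∀ j < κ.ord, ℵ₀ ≤ lam j) :
    (∀ i < κ.ord, ∃ η, InLevel (fun j => (lam j).ord) κ.ord i η) ∧
    (∀ i j : Ordinal, i < j → j < κ.ord →
      ∀ η, InLevel (fun k => (lam k).ord) κ.ord i η →
        ∃ ν, InLevel (fun k => (lam k).ord) κ.ord j ν ∧ ∀ k ≤ i, ν k = η k) := by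
  have hκ : IsSuccLimit κ.ord := isSuccLimit_ord hκunc.le
  have hlam {k} (hk : k < κ.ord) : IsSuccLimit (lam k).ord := isSuccLimit_ord (hinf k hk)
  refine ⟨fun i hi => ⟨_, inLevel_const (fun k hk => (hlam (hk.trans_lt hi)).bot_lt)
    (lt_succ i) (hκ.succ_lt hi)⟩, fun i j hij hj η hη => ?_⟩
  have hηi := hη.1 i le_rfl
  have ha₁ : ∀ k, i < k → k ≤ j → succ (η i).1 < (lam k).ord := fun k hik hkj =>
    (hlam (hkj.trans_lt hj)).succ_lt <| hηi.1.trans_le <|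
      ord_le_ord.mpr (hmono (hij.trans hj) (hkj.trans_lt hj) hik).le
  have ha₂ : max (η i).2 (succ j) < κ.ord := max_lt hηi.2 (hκ.succ_lt hj)
  exact ⟨_, hη.piecewise_const (a := (succ (η i).1, max (η i).2 (succ j))) ha₁ ha₂ (lt_succ _)
    (le_max_left _ _) ((lt_succ j).trans_le (le_max_right _ _)),
    fun k hk => Set.piecewise_eq_of_mem _ _ _ hk⟩

/-- **Every node of `𝒯` extends to every higher level, and all levels are nonempty:**
for a regular uncountable cardinal `κ` and a strictly increasing sequence
`⟨λ_j : j < κ⟩` of infinite cardinals, every level `𝒯_i` (`i < κ`) is nonempty, and for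
all `i < j < κ` and `η ∈ 𝒯_i` there is `ν ∈ 𝒯_j` with `ν ↾ (i+1) = η`. -/
theorem stmt7 (κ : Cardinal) (hκreg : κ.IsRegular) (hκunc : ℵ₀ < κ)
    (lam : Ordinal → Cardinal)
    (hmono : StrictMonoOn lam (Set.Iio κ.ord))
    (hinf : ∀ j < κ.ord, ℵ₀ ≤ lam j) :
    (∀ i < κ.ord, ∃ η, InLevel (fun j => (lam j).ord) κ.ord i η) ∧
    (∀ i j : Ordinal, i < j → j < κ.ord →
      ∀ η, InLevel (fun k => (lam k).ord) κ.ord i η →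
        ∃ ν, InLevel (fun k => (lam k).ord) κ.ord j ν ∧ ∀ k ≤ i, ν k = η k) :=
  stmt7_general κ hκunc lam hmono hinf
end

section
/- Let κ be a regular uncountable cardinal and ⟨λ_j : j < κ⟩ a strictly increasing sequence of infinite cardinals with κ < λ_0, and let the levels 𝒯_i (i < κ) of the tree 𝒯 be defined as in the context. For i < κ and α ≤ λ_i, set 𝒯_{i,α} = {η ∈ 𝒯_i : η(i,1) ≤ α}. Then for every i < κ and every ordinal α < λ_i, the truncated level 𝒯_{i,α} has cardinality strictly less than λ_i. -/
open Cardinal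

/-- `η`, a function on `{j | j ≤ i}` with values `η(j) = (η(j,1), η(j,2))`, is a node
of the `i`-th level `𝒯_i` of the tree `𝒯`:
(c) `η(j,1) < λ_j` and `η(j,2) < κ`;
(d) both coordinates are nondecreasing;
(e) `η` has finitely many values;
(f) if `j₁ < j₂ ≤ i` and the first coordinate is constant on `[j₁, j₂]`, then
    `j₂ < η(j₁,2)`. -/
def LevelFn (lam : Ordinal → Ordinal) (κ i : Ordinal)
    (η : ↥(Set.Iic i) → Ordinal × Ordinal) : Prop :=
  (∀ j : ↥(Set.Iic i), (η j).1 < lam j.1 ∧ (η j).2 < κ) ∧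
  (∀ j₁ j₂ : ↥(Set.Iic i), (j₁ : Ordinal) < (j₂ : Ordinal) →
    (η j₁).1 ≤ (η j₂).1 ∧ (η j₁).2 ≤ (η j₂).2) ∧
  (Set.range η).Finite ∧
  (∀ j₁ j₂ : ↥(Set.Iic i), (j₁ : Ordinal) < (j₂ : Ordinal) →
    (∀ j : ↥(Set.Iic i), (j₁ : Ordinal) ≤ (j : Ordinal) → (j : Ordinal) ≤ (j₂ : Ordinal) →
      (η j).1 = (η j₁).1) →
    (j₂ : Ordinal) < (η j₁).2)

/-!
A node `η ∈ 𝒯_{i,α}` is a monotone map from `[0, i]` to `[0, α] × κ` with finitely many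
values, and such a map is determined by the finite set of pairs `(j, η j)` at which a value
occurs for the first time. So `|𝒯_{i,α}|` is at most the number of finite subsets of
`[0, i] × [0, α] × κ`, which is `< λ_i` because `λ_i` is infinite and `i < κ < λ_i`, `α < λ_i`.
-/

open Set

def firstOccurrences {ι β : Type*} [LT ι] (f : ι → β) : Set (ι × β) :=
  {p | f p.1 = p.2 ∧ ∀ j < p.1, f j ≠ p.2}

section firstOccurrences

variable {ι β : Type*} [LinearOrder ι] {f g : ι → β}

theorem finite_firstOccurrences (hf : (range f).Finite) : (firstOccurrences f).Finite := by
  refine Finite.of_finite_image (f := Prod.snd) (hf.subset ?_) ?_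
  · rintro _ ⟨p, hp, rfl⟩
    exact ⟨p.1, hp.1⟩
  · rintro ⟨j, v⟩ ⟨hj, hjmin⟩ ⟨j', v'⟩ ⟨hj', hjmin'⟩ (rfl : v = v')
    rcases lt_trichotomy j j' with h | rfl | h
    · exact absurd hj (hjmin' j h)
    · rfl
    · exact absurd hj' (hjmin j' h)

theorem exists_mem_firstOccurrences [WellFoundedLT ι] (f : ι → β) (j : ι) :
    ∃ j₀ ≤ j, (j₀, f j) ∈ firstOccurrences f := by
  obtain ⟨j₀, hj₀ : f j₀ = f j, hmin⟩ := wellFounded_lt.has_min {j' | f j' = f j} ⟨j, rfl⟩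
  exact ⟨j₀, not_lt.1 (hmin j rfl), hj₀, fun j' h hj' => hmin j' hj' h⟩

theorem Monotone.eq_of_le_of_le [PartialOrder β] (hf : Monotone f) {a b c : ι}
    (hab : a ≤ b) (hbc : b ≤ c) (hac : f a = f c) : f b = f c :=
  le_antisymm (hf hbc) (hac ▸ hf hab)

/-- A monotone function on a well-order is constant between a first occurrence of a value and
any later occurrence of it, so the first occurrences determine the function. -/
theorem Monotone.eq_of_firstOccurrences_eq [WellFoundedLT ι] [PartialOrder β]
    (hf : Monotone f) (hg : Monotone g) (h : firstOccurrences f = firstOccurrences g) : f = g := by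
  funext j
  obtain ⟨j₁, hj₁, hf₁⟩ := exists_mem_firstOccurrences f j
  obtain ⟨j₂, hj₂, hg₂⟩ := exists_mem_firstOccurrences g j
  rcases le_total j₁ j₂ with h₁₂ | h₂₁
  · have hf₂ : f j₂ = g j := (h ▸ hg₂).1
    rw [← hf₂, hf.eq_of_le_of_le h₁₂ hj₂ hf₁.1]
  · have hg₁ : g j₁ = f j := (h ▸ hf₁).1
    rw [← hg₁, hg.eq_of_le_of_le h₂₁ hj₁ hg₂.1]

end firstOccurrences

theorem Cardinal.mk_monotone_finite_range_le {ι β : Type*} [LinearOrder ι] [WellFoundedLT ι]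
    [PartialOrder β] : #{f : ι → β // Monotone f ∧ (range f).Finite} ≤ #(Finset (ι × β)) := by
  refine mk_le_of_injective (f := fun f => (finite_firstOccurrences f.2.2).toFinset) ?_
  intro f g hfg
  exact Subtype.ext (f.2.1.eq_of_firstOccurrences_eq g.2.1 (Finite.toFinset_inj.1 hfg))

theorem Cardinal.mk_finset_lt {α : Type*} {c : Cardinal} (hc : ℵ₀ ≤ c) (h : #α < c) :
    #(Finset α) < c := by
  cases finite_or_infinite α
  · exact (lt_aleph0_of_finite _).trans_le hc
  · rwa [mk_finset_of_infinite]

theorem Cardinal.mk_Iic_ordinal_lt {o : Ordinal.{u}} {c : Cardinal.{u}} (hc : ℵ₀ ≤ c)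
    (ho : o < c.ord) : #(Iic o) < lift.{u + 1} c := by
  rw [← Iio_insert, mk_insert self_notMem_Iio, mk_Iio_ordinal]
  exact add_one_lt_of_lt (aleph0_le_lift.2 hc) (lift_lt.2 (lt_ord.1 ho))

namespace LevelFn

variable {lam : Ordinal → Ordinal} {κ i : Ordinal} {η : ↥(Iic i) → Ordinal × Ordinal}

theorem monotone (h : LevelFn lam κ i η) : Monotone η := by
  intro j₁ j₂ hj
  rcases hj.eq_or_lt with rfl | hlt
  · rfl
  · exact Prod.mk_le_mk.2 (h.2.1 j₁ j₂ hlt)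

theorem mem_Iic_prod_Iio {α : Ordinal} (h : LevelFn lam κ i η)
    (hα : (η ⟨i, self_mem_Iic⟩).1 ≤ α) (j : ↥(Iic i)) : η j ∈ Iic α ×ˢ Iio κ :=
  ⟨(h.monotone j.2).1.trans hα, (h.1 j).2⟩

end LevelFn

theorem stmt8_general (κ : Cardinal.{0})
    (lam : Ordinal.{0} → Cardinal.{0})
    (hmono : StrictMonoOn lam (Set.Iio κ.ord))
    (hinf : ∀ j < κ.ord, ℵ₀ ≤ lam j)
    (hκ0 : κ < lam 0)
    (i α : Ordinal.{0}) (hi : i < κ.ord) (hα : α < (lam i).ord) :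
    #{η : ↥(Set.Iic i) → Ordinal × Ordinal //
        LevelFn (fun j => (lam j).ord) κ.ord i η ∧ (η ⟨i, Set.self_mem_Iic⟩).1 ≤ α}
      < Cardinal.lift.{1} (lam i) := by
  have hκi : κ < lam i := hκ0.trans_le (hmono.monotoneOn (zero_le.trans_lt hi) hi zero_le)
  have hlam : ℵ₀ ≤ lam i := hinf i hi
  set s := Iic α ×ˢ Iio κ.ord
  have hs : #s < lift.{1} (lam i) := by
    rw [mk_congr (Equiv.Set.prod _ _), mk_prod, lift_id, lift_id, mk_Iio_ordinal, card_ord]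
    exact mul_lt_of_lt (aleph0_le_lift.2 hlam) (mk_Iic_ordinal_lt hlam hα) (lift_lt.2 hκi)
  let restrict
      (η : {η // LevelFn (fun j => (lam j).ord) κ.ord i η ∧ (η ⟨i, self_mem_Iic⟩).1 ≤ α}) :
      {f : ↥(Iic i) → s // Monotone f ∧ (range f).Finite} :=
    ⟨codRestrict η.1 s (η.2.1.mem_Iic_prod_Iio η.2.2), fun _ _ h => η.2.1.monotone h,
      (η.2.1.2.2.1.preimage Subtype.val_injective.injOn).subset
        (by rintro _ ⟨j, rfl⟩; exact ⟨j, rfl⟩)⟩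
  have restrict_injective : Function.Injective restrict := fun η η' h =>
    Subtype.ext (funext fun j => congrArg Subtype.val (congrFun (congrArg Subtype.val h) j))
  calc _ ≤ #{f : ↥(Iic i) → s // Monotone f ∧ (range f).Finite} :=
        mk_le_of_injective restrict_injective
    _ ≤ #(Finset (↥(Iic i) × s)) := mk_monotone_finite_range_le
    _ < lift.{1} (lam i) := by
      refine mk_finset_lt (aleph0_le_lift.2 hlam) ?_
      rw [mk_prod, lift_id, lift_id]
      exact mul_lt_of_lt (aleph0_le_lift.2 hlam)
        (mk_Iic_ordinal_lt hlam (hi.trans (ord_lt_ord.2 hκi))) hs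

/-- **The truncated levels `𝒯_{i,α} = {η ∈ 𝒯_i : η(i,1) ≤ α}` are small** (Remark 2.8):
for a regular uncountable cardinal `κ`, a strictly increasing sequence
`⟨λ_j : j < κ⟩` of infinite cardinals with `κ < λ_0`, every `i < κ` and every
`α < λ_i`, the set `𝒯_{i,α}` has cardinality `< λ_i`. -/
theorem stmt8 (κ : Cardinal.{0}) (hκreg : κ.IsRegular) (hκunc : ℵ₀ < κ)
    (lam : Ordinal.{0} → Cardinal.{0})
    (hmono : StrictMonoOn lam (Set.Iio κ.ord))
    (hinf : ∀ j < κ.ord, ℵ₀ ≤ lam j)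
    (hκ0 : κ < lam 0)
    (i α : Ordinal.{0}) (hi : i < κ.ord) (hα : α < (lam i).ord) :
    #{η : ↥(Set.Iic i) → Ordinal × Ordinal //
        LevelFn (fun j => (lam j).ord) κ.ord i η ∧ (η ⟨i, Set.self_mem_Iic⟩).1 ≤ α}
      < Cardinal.lift.{1} (lam i) :=
  stmt8_general κ lam hmono hinf hκ0 i α hi hα
end

section
/- Assume λ is a limit ordinal with cf(λ) > ℵ₀ and 𝒯 is a tree of height λ all of whose levels are finite. Then 𝒯 has a cofinal branch, i.e. a chain B ⊆ 𝒯 that meets the level 𝒯_α for every α < λ. -/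
/-!
Fix an ultrafilter `U` on `{β // β < λ}` containing every final segment, and pick `g β` on
level `β`. For `α < λ` the `U`-almost all `β ≥ α` are split, according to the ancestor of
`g β` on level `α`, among the finitely many elements of that level, so one of them, `s α`,
lies below `U`-almost all `g β`. Any two `s α`, `s α'` then lie below a common `g β`, and
the predecessors of a node form a chain, so `{s α | α < λ}` is a cofinal branch.
-/

section FiniteLevels

variable {T ι : Type*} [PartialOrder T] [LinearOrder ι] {h : T → ι}

theorem exists_isChain_forall_exists_mem_of_finite_levels
    (hchain : ∀ t : T, IsChain (· ≤ ·) (Set.Iic t))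
    (hanc : ∀ t : T, ∀ α ≤ h t, ∃ s ≤ t, h s = α) (lam : ι)
    (hfin : ∀ α < lam, {t | h t = α}.Finite) (hne : ∀ α < lam, {t | h t = α}.Nonempty) :
    ∃ B : Set T, IsChain (· ≤ ·) B ∧ ∀ α < lam, ∃ t ∈ B, h t = α := by
  rcases isEmpty_or_nonempty (Set.Iio lam) with hempty | hnonempty
  · exact ⟨∅, IsChain.empty, fun α hα => (hempty.false ⟨α, hα⟩).elim⟩
  let U : Ultrafilter (Set.Iio lam) := .of Filter.atTop
  choose g hg using fun β : Set.Iio lam => hne β β.2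
  have below_level (α : Set.Iio lam) : ∃ t ∈ {t | h t = α}, ∀ᶠ β in U, t ≤ g β := by
    refine (Ultrafilter.eventually_exists_mem_iff (hfin α α.2)).1 ?_
    filter_upwards [Ultrafilter.of_le _ (Filter.Ici_mem_atTop α)] with β hβ
    obtain ⟨t, htg, hht⟩ := hanc (g β) α (by rw [hg β]; exact hβ)
    exact ⟨t, hht, htg⟩
  choose s hs hsg using below_level
  refine ⟨Set.range s, ?_, fun α hα => ⟨s ⟨α, hα⟩, Set.mem_range_self _, hs _⟩⟩
  rintro _ ⟨α, rfl⟩ _ ⟨α', rfl⟩ hαα'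
  obtain ⟨β, hαβ, hα'β⟩ := ((hsg α).and (hsg α')).exists
  exact hchain (g β) hαβ hα'β hαα'

end FiniteLevels

section WellFoundedTree

variable {T : Type*} [PartialOrder T]

theorem isChain_Iic_of_isWellOrder
    (hwo : ∀ t : T, IsWellOrder {s : T // s < t} (fun a b => (a : T) < (b : T))) (t : T) :
    IsChain (· ≤ ·) (Set.Iic t) := by
  intro a ha b hb hab
  rcases ha.eq_or_lt with rfl | hat
  · exact .inr hb
  rcases hb.eq_or_lt with rfl | hbt
  · exact .inl ha
  let _ := hwo t
  rcases trichotomous_of (fun x y : {s // s < t} => (x : T) < y) ⟨a, hat⟩ ⟨b, hbt⟩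
    with h | h | h
  · exact .inl h.le
  · exact .inl (congrArg Subtype.val h).le
  · exact .inr h.le

variable (hwo : ∀ t : T, IsWellOrder {s : T // s < t} (fun a b => (a : T) < (b : T)))

noncomputable def treeHeight (t : T) : Ordinal :=
  @Ordinal.type {s : T // s < t} (fun a b => (a : T) < (b : T)) (hwo t)

theorem treeHeight_eq_typein {s t : T} (hst : s < t) :
    treeHeight hwo s =
      @Ordinal.typein {x : T // x < t} (fun a b => (a : T) < (b : T)) (hwo t) ⟨s, hst⟩ := by
  let _ := hwo t
  let _ := hwo s
  rw [treeHeight, ← Ordinal.type_subrel]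
  exact RelIso.ordinalType_congr
    ⟨⟨fun x => ⟨⟨x.1, x.2.trans hst⟩, x.2⟩, fun y => ⟨y.1.1, y.2⟩,
      fun _ => rfl, fun _ => rfl⟩, Iff.rfl⟩

theorem exists_le_treeHeight_eq (t : T) :
    ∀ α ≤ treeHeight hwo t, ∃ s ≤ t, treeHeight hwo s = α := by
  intro α hα
  rcases hα.eq_or_lt with rfl | hlt
  · exact ⟨t, le_rfl, rfl⟩
  let _ := hwo t
  obtain ⟨⟨s, hst⟩, rfl⟩ := Ordinal.typein_surj _ hlt
  exact ⟨s, hst.le, treeHeight_eq_typein hwo hst⟩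

end WellFoundedTree

open Cardinal

theorem stmt9_general (lam : Ordinal.{0})
    (T : Type) [PartialOrder T]
    (hwo : ∀ t : T, IsWellOrder {s : T // s < t} (fun a b => (a : T) < (b : T)))
    (height : T → Ordinal.{0})
    (hheight : ∀ t : T, height t = @Ordinal.type {s : T // s < t}
      (fun a b => (a : T) < (b : T)) (hwo t))
    (hlevfin : ∀ α < lam, {t : T | height t = α}.Finite)
    (hlevne : ∀ α < lam, {t : T | height t = α}.Nonempty) :
    ∃ B : Set T, IsChain (· ≤ ·) B ∧ ∀ α < lam, ∃ t ∈ B, height t = α := by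
  obtain rfl : height = treeHeight hwo := funext hheight
  exact exists_isChain_forall_exists_mem_of_finite_levels (isChain_Iic_of_isWellOrder hwo)
    (exists_le_treeHeight_eq hwo) lam hlevfin hlevne

/-- **Kurepa's theorem** (Fact 1.7): a tree of height `λ`, where `λ` is a limit ordinal
of uncountable cofinality, all of whose levels are finite (and nonempty) has a cofinal
branch, i.e. a chain meeting every level `𝒯_α` for `α < λ`.

Here a tree is a partial order `T` in which the set of strict predecessors of any
element is well-ordered by `<`; `height t` is the order type of the set of strict
predecessors of `t`. -/
theorem stmt9 (lam : Ordinal.{0}) (hlim : Order.IsSuccLimit lam) (hcof : ℵ₀ < lam.cof)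
    (T : Type) [PartialOrder T]
    (hwo : ∀ t : T, IsWellOrder {s : T // s < t} (fun a b => (a : T) < (b : T)))
    (height : T → Ordinal.{0})
    (hheight : ∀ t : T, height t = @Ordinal.type {s : T // s < t}
      (fun a b => (a : T) < (b : T)) (hwo t))
    (hheight_lt : ∀ t : T, height t < lam)
    (hlevfin : ∀ α < lam, {t : T | height t = α}.Finite)
    (hlevne : ∀ α < lam, {t : T | height t = α}.Nonempty) :
    ∃ B : Set T, IsChain (· ≤ ·) B ∧ ∀ α < lam, ∃ t ∈ B, height t = α :=
  stmt9_general lam T hwo height hheight hlevfin hlevne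
end
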